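/- The lowest eigenvalue λ(τ) of the Montgomery operator tends to +∞ as τ → +∞ and as τ → -∞. -/

import Mathlib

open MeasureTheory

/-- The quadratic form of the Montgomery operator `P(τ) = -d²/dt² + (t²/2 + τ)²` on `L²(ℝ)`. -/
noncomputable def montgomeryForm (τ : ℝ) (f : ℝ → ℝ) : ℝ :=
  ∫ t : ℝ, ((deriv f t) ^ 2 + (t ^ 2 / 2 + τ) ^ 2 * (f t) ^ 2)

/-- Admissible (normalized) trial functions: `f ∈ H¹(ℝ)` with `t² f ∈ L²(ℝ)` and `‖f‖₂ = 1`. -/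
def montgomeryAdm (f : ℝ → ℝ) : Prop :=
  Differentiable ℝ f ∧
  Integrable (fun t : ℝ => (deriv f t) ^ 2) ∧
  Integrable (fun t : ℝ => (f t) ^ 2) ∧
  Integrable (fun t : ℝ => (t ^ 2 * f t) ^ 2) ∧
  (∫ t : ℝ, (f t) ^ 2) = 1

/-- The lowest eigenvalue `λ(τ)` of the Montgomery operator, defined variationally. -/
noncomputable def montgomeryLambda (τ : ℝ) : ℝ :=
  sInf {E : ℝ | ∃ f : ℝ → ℝ, montgomeryAdm f ∧ montgomeryForm τ f = E}

/-! For `τ ≥ 0` the potential `(t²/2 + τ)²` is at least `τ²`, so `λ(τ) ≥ τ²`. For `τ = -r²/2 ≪ 0`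
the potential `((t² - r²)/2)²` vanishes only on the circle `|t| = r`. A normalized trial function
with kinetic energy `∫ f'² < M` obeys the one-dimensional Sobolev bound `f² ≤ 2 + M`, so a thin
shell around `|t| = r` carries at most half of its mass, while off that shell the potential
exceeds `2M`; either way the energy is at least `M`. -/

open Real Set Filter

theorem abs_two_mul_mul_le_sq_add_sq (a b : ℝ) : |2 * a * b| ≤ a ^ 2 + b ^ 2 := by
  rw [abs_mul, abs_mul, abs_two, ← sq_abs a, ← sq_abs b]
  exact two_mul_le_add_sq _ _

theorem exists_le_integral_of_nonneg {g : ℝ → ℝ} (hg : Integrable g) (hg0 : ∀ t, 0 ≤ g t) :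
    ∃ y, g y ≤ ∫ t, g t := by
  obtain ⟨y, -, hy⟩ := exists_le_setAverage (s := Icc (0 : ℝ) 1) (by simp) (by simp)
    hg.integrableOn
  rw [setAverage_eq, Real.volume_real_Icc_of_le zero_le_one, sub_zero, inv_one, one_smul] at hy
  exact ⟨y, hy.trans (setIntegral_le_integral hg (Eventually.of_forall hg0))⟩

theorem integrable_two_mul_mul_deriv {f : ℝ → ℝ} (hf : Differentiable ℝ f)
    (hf2 : Integrable fun t => f t ^ 2) (hf'2 : Integrable fun t => deriv f t ^ 2) :
    Integrable fun t => 2 * f t * deriv f t :=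
  (hf2.add hf'2).mono'
    ((hf.continuous.measurable.const_mul 2).mul (measurable_deriv f)).aestronglyMeasurable
    (Eventually.of_forall fun _ => abs_two_mul_mul_le_sq_add_sq _ _)

theorem sq_le_two_mul_integral_sq_add_integral_deriv_sq {f : ℝ → ℝ} (hf : Differentiable ℝ f)
    (hf2 : Integrable fun t => f t ^ 2) (hf'2 : Integrable fun t => deriv f t ^ 2) (x : ℝ) :
    f x ^ 2 ≤ 2 * (∫ t, f t ^ 2) + ∫ t, deriv f t ^ 2 := by
  have hg := integrable_two_mul_mul_deriv hf hf2 hf'2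
  obtain ⟨y, hy⟩ := exists_le_integral_of_nonneg hf2 fun t => sq_nonneg (f t)
  have hftc : ∫ t in y..x, 2 * f t * deriv f t = f x ^ 2 - f y ^ 2 :=
    intervalIntegral.integral_eq_sub_of_hasDerivAt
      (fun t _ => by simpa [mul_comm, mul_assoc] using (hf t).hasDerivAt.fun_pow 2)
      hg.intervalIntegrable
  have hbound : ∫ t in y..x, 2 * f t * deriv f t ≤ (∫ t, f t ^ 2) + ∫ t, deriv f t ^ 2 :=
    calc ∫ t in y..x, 2 * f t * deriv f t
        ≤ ∫ t in uIoc y x, |2 * f t * deriv f t| :=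
          (le_abs_self _).trans <| by
            simpa only [norm_eq_abs] using intervalIntegral.norm_integral_le_integral_norm_uIoc
              (f := fun t => 2 * f t * deriv f t)
      _ ≤ ∫ t, |2 * f t * deriv f t| :=
          setIntegral_le_integral hg.abs (Eventually.of_forall fun t => abs_nonneg _)
      _ ≤ ∫ t, (f t ^ 2 + deriv f t ^ 2) :=
          integral_mono hg.abs (hf2.add hf'2) fun t => abs_two_mul_mul_le_sq_add_sq _ _
      _ = (∫ t, f t ^ 2) + ∫ t, deriv f t ^ 2 := integral_add hf2 hf'2
  linarith

theorem mul_sub_mul_measureReal_le_integral_mul {α : Type*} [MeasurableSpace α] {μ : Measure α}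
    {g W : α → ℝ} {S : Set α} {m B : ℝ} (hS : MeasurableSet S) (hμS : μ S ≠ ⊤)
    (hg : Integrable g μ) (hWg : Integrable (fun x => W x * g x) μ) (hm : 0 ≤ m)
    (hg0 : ∀ x, 0 ≤ g x) (hW0 : ∀ x, 0 ≤ W x) (hgB : ∀ x ∈ S, g x ≤ B)
    (hWm : ∀ x ∉ S, m ≤ W x) :
    m * (∫ x, g x ∂μ) - m * B * μ.real S ≤ ∫ x, W x * g x ∂μ := by
  have hind : Integrable (S.indicator fun _ => m * B) μ :=
    (integrableOn_const hμS).integrable_indicator hS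
  have hpt : ∀ x, m * g x - S.indicator (fun _ => m * B) x ≤ W x * g x := by
    intro x
    by_cases hx : x ∈ S
    · rw [indicator_of_mem hx]
      nlinarith [mul_le_mul_of_nonneg_left (hgB x hx) hm, mul_nonneg (hW0 x) (hg0 x)]
    · rw [indicator_of_notMem hx, sub_zero]
      exact mul_le_mul_of_nonneg_right (hWm x hx) (hg0 x)
  have hint : ∫ x, (m * g x - S.indicator (fun _ => m * B) x) ∂μ ≤ ∫ x, W x * g x ∂μ :=
    integral_mono ((hg.const_mul m).sub hind) hWg hpt
  rwa [integral_sub (hg.const_mul m) hind, integral_const_mul, integral_indicator_const _ hS,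
    smul_eq_mul, mul_comm (μ.real S)] at hint

theorem integrable_potential_mul_sq (τ : ℝ) {f : ℝ → ℝ} (hf2 : Integrable fun t => f t ^ 2)
    (ht2f : Integrable fun t => (t ^ 2 * f t) ^ 2) :
    Integrable fun t => (t ^ 2 / 2 + τ) ^ 2 * f t ^ 2 := by
  refine ((ht2f.const_mul (1 / 2)).add (hf2.const_mul (2 * τ ^ 2))).mono'
    ((continuous_id.pow 2 |>.div_const 2 |>.add continuous_const |>.pow 2).aestronglyMeasurable.mul
      hf2.aestronglyMeasurable) (Eventually.of_forall fun t => ?_)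
  rw [norm_of_nonneg (by positivity)]
  show _ ≤ 1 / 2 * (t ^ 2 * f t) ^ 2 + 2 * τ ^ 2 * f t ^ 2
  nlinarith [mul_nonneg (sq_nonneg (t ^ 2 / 2 - τ)) (sq_nonneg (f t))]

theorem montgomeryForm_eq_add {τ : ℝ} {f : ℝ → ℝ} (hf : montgomeryAdm f) :
    montgomeryForm τ f = (∫ t, deriv f t ^ 2) + ∫ t, (t ^ 2 / 2 + τ) ^ 2 * f t ^ 2 :=
  integral_add hf.2.1 (integrable_potential_mul_sq τ hf.2.2.1 hf.2.2.2.1)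

noncomputable def normalizedGaussian (t : ℝ) : ℝ := (√√π)⁻¹ * exp (-(t ^ 2) / 2)

theorem normalizedGaussian_sq (t : ℝ) : normalizedGaussian t ^ 2 = (√π)⁻¹ * exp (-1 * t ^ 2) := by
  rw [normalizedGaussian, mul_pow, inv_pow, sq_sqrt (sqrt_nonneg π), ← exp_nat_mul]
  ring_nf

theorem hasDerivAt_normalizedGaussian (t : ℝ) :
    HasDerivAt normalizedGaussian (-t * normalizedGaussian t) t := by
  have h : HasDerivAt (fun t => -(t ^ 2) / 2) (-t) t :=
    ((hasDerivAt_pow 2 t).fun_neg.div_const 2).congr_deriv (by norm_num; ring)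
  exact (h.exp.const_mul (√√π)⁻¹).congr_deriv (by rw [normalizedGaussian]; ring)

theorem integrable_pow_mul_normalizedGaussian_sq (n : ℕ) :
    Integrable fun t => t ^ n * normalizedGaussian t ^ 2 := by
  simp_rw [normalizedGaussian_sq, mul_left_comm _ (√π)⁻¹]
  refine Integrable.const_mul ?_ _
  simpa [Real.rpow_natCast] using
    integrable_rpow_mul_exp_neg_mul_sq one_pos (s := n) (by linarith [n.cast_nonneg (α := ℝ)])

theorem montgomeryAdm_normalizedGaussian : montgomeryAdm normalizedGaussian := by
  have hderiv : deriv normalizedGaussian = fun t => -t * normalizedGaussian t :=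
    funext fun t => (hasDerivAt_normalizedGaussian t).deriv
  refine ⟨fun t => (hasDerivAt_normalizedGaussian t).differentiableAt, ?_, ?_, ?_, ?_⟩
  · simpa only [hderiv, mul_pow, neg_sq] using integrable_pow_mul_normalizedGaussian_sq 2
  · simpa using integrable_pow_mul_normalizedGaussian_sq 0
  · simpa only [mul_pow, ← pow_mul] using integrable_pow_mul_normalizedGaussian_sq 4
  · simp only [normalizedGaussian_sq, integral_const_mul, integral_gaussian, div_one]
    exact inv_mul_cancel₀ (sqrt_pos.2 pi_pos).ne'

theorem le_montgomeryLambda {τ c : ℝ} (h : ∀ f, montgomeryAdm f → c ≤ montgomeryForm τ f) :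
    c ≤ montgomeryLambda τ := by
  refine le_csInf ⟨_, normalizedGaussian, montgomeryAdm_normalizedGaussian, rfl⟩ ?_
  rintro E ⟨f, hf, rfl⟩
  exact h f hf

theorem sq_le_montgomeryForm {τ : ℝ} (hτ : 0 ≤ τ) {f : ℝ → ℝ} (hf : montgomeryAdm f) :
    τ ^ 2 ≤ montgomeryForm τ f := by
  rw [montgomeryForm_eq_add hf]
  obtain ⟨-, -, hf2, ht2f, hnorm⟩ := hf
  have hpot : τ ^ 2 ≤ ∫ t, (t ^ 2 / 2 + τ) ^ 2 * f t ^ 2 :=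
    calc τ ^ 2 = ∫ t, τ ^ 2 * f t ^ 2 := by rw [integral_const_mul, hnorm, mul_one]
      _ ≤ ∫ t, (t ^ 2 / 2 + τ) ^ 2 * f t ^ 2 :=
        integral_mono (hf2.const_mul _) (integrable_potential_mul_sq τ hf2 ht2f) fun t => by
          gcongr; nlinarith [sq_nonneg t]
  linarith [(integral_nonneg fun t => sq_nonneg (deriv f t) : 0 ≤ ∫ t, deriv f t ^ 2)]

theorem sq_mul_le_sq_sub_sq {r δ t : ℝ} (hr : 0 ≤ r) (hδ : 0 ≤ δ) (ht : δ ≤ |(|t|) - r|) :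
    (δ * r) ^ 2 ≤ (t ^ 2 - r ^ 2) ^ 2 := by
  rw [← sq_abs (t ^ 2 - r ^ 2), ← sq_abs t, sq_sub_sq, abs_mul,
    abs_of_nonneg (by positivity : 0 ≤ |t| + r), mul_comm _ |(|t|) - r|]
  gcongr
  exact le_add_of_nonneg_left (abs_nonneg t)

theorem volume_abs_preimage_ball_le (r δ : ℝ) :
    volume (abs ⁻¹' Metric.ball r δ) ≤ ENNReal.ofReal (4 * δ) := by
  have hsub : abs ⁻¹' Metric.ball r δ ⊆ Metric.ball r δ ∪ Metric.ball (-r) δ := by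
    intro t ht
    simp only [mem_preimage, Real.ball_eq_Ioo, mem_Ioo, mem_union] at ht ⊢
    rcases le_or_gt 0 t with h | h
    · rw [abs_of_nonneg h] at ht; exact Or.inl ht
    · rw [abs_of_neg h] at ht; exact Or.inr ⟨by linarith, by linarith⟩
  rcases le_or_gt δ 0 with hδ | hδ
  · simp [Metric.ball_eq_empty.2 hδ]
  calc volume (abs ⁻¹' Metric.ball r δ)
      ≤ volume (Metric.ball r δ) + volume (Metric.ball (-r) δ) :=
        (measure_mono hsub).trans (measure_union_le _ _)
    _ = ENNReal.ofReal (4 * δ) := by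
        rw [Real.volume_ball, Real.volume_ball,
          ← ENNReal.ofReal_add (by positivity) (by positivity)]
        ring_nf

theorem le_montgomeryForm_of_le_neg {M τ : ℝ} (hM : 0 ≤ M) (hτ : τ ≤ -256 * M * (2 + M) ^ 2)
    {f : ℝ → ℝ} (hf : montgomeryAdm f) : M ≤ montgomeryForm τ f := by
  rw [montgomeryForm_eq_add hf]
  have hpot0 : 0 ≤ ∫ t, (t ^ 2 / 2 + τ) ^ 2 * f t ^ 2 := integral_nonneg fun _ => by positivity
  obtain ⟨hfd, hf'2, hf2, ht2f, hnorm⟩ := hf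
  set K := ∫ t, deriv f t ^ 2
  rcases le_or_gt M K with hKM | hKM
  · linarith
  -- Below the kinetic level M, `f ^ 2 ≤ B`; the shell `||t| - r| < δ` then carries at most half
  -- of the mass, and `r ^ 2 = -2τ ≥ 512 M B ^ 2` makes the potential at least `2M` off it.
  have hK0 : 0 ≤ K := integral_nonneg fun t => sq_nonneg (deriv f t)
  set B := 2 + M
  set δ := 1 / (8 * B)
  set r := √(-2 * τ)
  have hB : 0 < B := by positivity
  have hr : 0 ≤ r := sqrt_nonneg _
  have hr2 : r ^ 2 = -2 * τ := sq_sqrt (by nlinarith)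
  have hfB : ∀ t, f t ^ 2 ≤ B := fun t => by
    linarith [sq_le_two_mul_integral_sq_add_integral_deriv_sq hfd hf2 hf'2 t]
  have hpot : ∀ t ∉ abs ⁻¹' Metric.ball r δ, 2 * M ≤ (t ^ 2 / 2 + τ) ^ 2 := by
    intro t ht
    rw [mem_preimage, Metric.mem_ball, Real.dist_eq, not_lt] at ht
    have hδ2 : δ ^ 2 * (64 * B ^ 2) = 1 := by simp only [δ]; field_simp; ring
    have hτ' : 512 * M * B ^ 2 ≤ -2 * τ := by linarith
    calc 2 * M ≤ (δ * r) ^ 2 / 4 := by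
          rw [mul_pow, hr2]
          nlinarith [mul_le_mul_of_nonneg_left hτ' (sq_nonneg δ)]
      _ ≤ (t ^ 2 - r ^ 2) ^ 2 / 4 := by linarith [sq_mul_le_sq_sub_sq hr (by positivity) ht]
      _ = (t ^ 2 / 2 + τ) ^ 2 := by rw [hr2]; ring
  have hvol : volume.real (abs ⁻¹' Metric.ball r δ) ≤ 4 * δ :=
    ENNReal.toReal_le_of_le_ofReal (by positivity) (volume_abs_preimage_ball_le r δ)
  have hloc := mul_sub_mul_measureReal_le_integral_mul
    (measurableSet_ball.preimage continuous_abs.measurable)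
    ((volume_abs_preimage_ball_le r δ).trans_lt ENNReal.ofReal_lt_top).ne
    hf2 (integrable_potential_mul_sq τ hf2 ht2f) (by positivity : 0 ≤ 2 * M)
    (fun t => sq_nonneg (f t)) (fun t => sq_nonneg _) (fun t _ => hfB t) hpot
  have hδB : 4 * δ * B = 1 / 2 := by simp only [δ]; field_simp; ring
  rw [hnorm] at hloc
  nlinarith [mul_le_mul_of_nonneg_left hvol (by positivity : 0 ≤ 2 * M * B)]

/-- The lowest eigenvalue `λ(τ)` of the Montgomery operator tends to `+∞` as `τ → +∞`
and as `τ → -∞`. -/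
theorem montgomeryLambda_tendsto_atTop :
    Filter.Tendsto montgomeryLambda Filter.atTop Filter.atTop ∧
    Filter.Tendsto montgomeryLambda Filter.atBot Filter.atTop := by
  refine ⟨tendsto_atTop_mono' _ ?_ (tendsto_pow_atTop two_ne_zero), tendsto_atTop.2 fun b => ?_⟩
  · filter_upwards [eventually_ge_atTop 0] with τ hτ
    exact le_montgomeryLambda fun f hf => sq_le_montgomeryForm hτ hf
  · filter_upwards [eventually_le_atBot (-256 * max b 0 * (2 + max b 0) ^ 2)] with τ hτ
    exact (le_max_left b 0).trans <|
      le_montgomeryLambda fun f hf => le_montgomeryForm_of_le_neg (le_max_right b 0) hτ hf
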